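/- Let R be a partially ordered set, let J be a type, let J₁ ⊆ J₂ be subsets of J, and let r, rᵒᵖᵗ : J → R satisfy rᵒᵖᵗ(j) ≤ r(j) for all j ∈ J. Assume the image sets r(J₁) and rᵒᵖᵗ(J₂) are finite. Then the upper closure of the minimal elements of r(J₁) is contained in the upper closure of the minimal elements of rᵒᵖᵗ(J₂). (Lower approximation of system-level resources: the upward closure of the true induced antichain is contained in the upward closure of the propagated optimistic antichain.) -/

import Mathlib

/-- The minimal elements of a set `S` in a poset:
`min S = { x ∈ S | there is no y ∈ S with y < x }`. -/
def minimalsOf {R : Type*} [PartialOrder R] (S : Set R) : Set R :=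
  {x ∈ S | ¬ ∃ y ∈ S, y < x}

section

variable {R : Type*} [PartialOrder R]

theorem minimalsOf_eq_setOf_minimal (S : Set R) :
    minimalsOf S = {x | Minimal (· ∈ S) x} := by
  ext x
  simp only [minimalsOf, Set.mem_ofPred_eq, not_exists, not_and, minimal_iff_forall_lt]
  exact and_congr_right fun _ => ⟨fun h _ hy hyS => h _ hyS hy, fun h _ hyS hy => h hy hyS⟩

theorem minimalsOf_subset (S : Set R) : minimalsOf S ⊆ S := fun _ hx => hx.1

theorem Set.Finite.upperClosure_minimalsOf {S : Set R} (hS : S.Finite) :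
    upperClosure (minimalsOf S) = upperClosure S := by
  refine le_antisymm ?_ (upperClosure_anti (minimalsOf_subset S))
  rintro x ⟨a, ha, hax⟩
  obtain ⟨m, hma, hm⟩ := hS.exists_le_minimal ha
  exact ⟨m, by rwa [minimalsOf_eq_setOf_minimal], hma.trans hax⟩

theorem Set.image_subset_upperClosure_image {J : Type*} {J₁ J₂ : Set J} (hJ : J₁ ⊆ J₂)
    {f g : J → R} (hgf : ∀ j ∈ J₁, g j ≤ f j) :
    f '' J₁ ⊆ upperClosure (g '' J₂) := by
  rintro _ ⟨j, hj, rfl⟩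
  exact ⟨g j, Set.mem_image_of_mem g (hJ hj), hgf j hj⟩

end

theorem lower_approx_system_resources_general {R J : Type*} [PartialOrder R]
    (J₁ J₂ : Set J) (hJ : J₁ ⊆ J₂)
    (r ropt : J → R) (h : ∀ j : J, ropt j ≤ r j)
    (h₂ : (ropt '' J₂).Finite) :
    (upperClosure (minimalsOf (r '' J₁)) : Set R) ⊆
      upperClosure (minimalsOf (ropt '' J₂)) :=
  calc (upperClosure (minimalsOf (r '' J₁)) : Set R)
      ⊆ upperClosure (r '' J₁) := upperClosure_anti (minimalsOf_subset _)
    _ ⊆ upperClosure (ropt '' J₂) :=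
      upperClosure_min (Set.image_subset_upperClosure_image hJ fun j _ => h j)
        (upperClosure _).upper
    _ = upperClosure (minimalsOf (ropt '' J₂)) := by rw [h₂.upperClosure_minimalsOf]

/-- Lower approximation of system-level resources: the upward closure of the
true induced antichain is contained in the upward closure of the propagated
optimistic antichain. -/
theorem lower_approx_system_resources {R J : Type*} [PartialOrder R]
    (J₁ J₂ : Set J) (hJ : J₁ ⊆ J₂)
    (r ropt : J → R) (h : ∀ j : J, ropt j ≤ r j)
    (h₁ : (r '' J₁).Finite) (h₂ : (ropt '' J₂).Finite) :
    (upperClosure (minimalsOf (r '' J₁)) : Set R) ⊆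
      upperClosure (minimalsOf (ropt '' J₂)) :=
  lower_approx_system_resources_general J₁ J₂ hJ r ropt h h₂
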